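/- arXiv:cs/0211031 — 13 statements merged into one kernel-verified Lean document; each statement's English description precedes it below -/
import Mathlib

section
/- A clause γ ∈ Π is necessary (belongs to every IES of Π) if and only if Π \ {γ} does not entail γ. -/
open scoped Classical

abbrev Clause := Finset (ℕ × Bool)
abbrev Assignment := ℕ → Bool

/-- An assignment satisfies a clause iff it makes some literal true. -/
def satC (ω : Assignment) (c : Clause) : Prop := ∃ l ∈ c, ω l.1 = l.2

/-- An assignment satisfies a CNF (finite set of clauses). -/
def satF (ω : Assignment) (P : Finset Clause) : Prop := ∀ c ∈ P, satC ω c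

/-- A CNF entails a clause. -/
def entails (P : Finset Clause) (γ : Clause) : Prop := ∀ ω, satF ω P → satC ω γ

/-- Two CNFs are (logically) equivalent: same models. -/
def equivF (P Q : Finset Clause) : Prop := ∀ ω, satF ω P ↔ satF ω Q

/-- A clause is non-tautological. -/
def nonTaut (c : Clause) : Prop := ∀ v, ¬((v, true) ∈ c ∧ (v, false) ∈ c)

/-- A CNF is redundant: it is equivalent to a proper subset. -/
def redundantF (P : Finset Clause) : Prop := ∃ Q ⊂ P, equivF Q P

/-- A CNF is irredundant: no clause is entailed by the others. -/
def irredundant (P : Finset Clause) : Prop := ∀ γ ∈ P, ¬ entails (P.erase γ) γ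

/-- Q is an irredundant equivalent subset (IES) of P. -/
def IES (P Q : Finset Clause) : Prop := Q ⊆ P ∧ equivF Q P ∧ irredundant Q

lemma exists_irred_sub (P : Finset Clause) :
    ∀ R : Finset Clause, equivF R P → ∃ Q, Q ⊆ R ∧ equivF Q P ∧ irredundant Q := by
  intro R
  induction R using Finset.strongInduction with
  | _ R ih =>
    intro hR
    by_cases h : irredundant R
    · exact ⟨R, le_refl _, hR, h⟩
    · simp only [irredundant, not_forall, not_not] at h
      obtain ⟨c, hc, hent⟩ := h
      have hq : equivF (R.erase c) P := by
        intro ω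
        constructor
        · intro hs
          refine (hR ω).1 ?_
          intro d hd
          by_cases hdc : d = c
          · subst hdc; exact hent ω hs
          · exact hs d (Finset.mem_erase.mpr ⟨hdc, hd⟩)
        · intro hs d hd
          exact (hR ω).2 hs d (Finset.mem_of_mem_erase hd)
      obtain ⟨Q, hQR, hQ⟩ := ih (R.erase c) (Finset.erase_ssubset hc) hq
      exact ⟨Q, hQR.trans (Finset.erase_subset _ _), hQ⟩

/-- A clause γ ∈ P is in every IES of P iff P \ {γ} does not entail γ. -/
theorem necessary_iff_not_entailed (P : Finset Clause) (γ : Clause) (hγ : γ ∈ P)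
    (hnt : ∀ c ∈ P, nonTaut c) :
    (∀ Q, IES P Q → γ ∈ Q) ↔ ¬ entails (P.erase γ) γ := by
  constructor
  · intro hnec hent
    have heq : equivF (P.erase γ) P := by
      intro ω
      constructor
      · intro hs d hd
        by_cases hdγ : d = γ
        · subst hdγ; exact hent ω hs
        · exact hs d (Finset.mem_erase.mpr ⟨hdγ, hd⟩)
      · intro hs d hd
        exact hs d (Finset.mem_of_mem_erase hd)
    obtain ⟨Q, hQR, hQeq, hQirr⟩ := exists_irred_sub P (P.erase γ) heq
    have : γ ∈ Q := hnec Q ⟨hQR.trans (Finset.erase_subset _ _), hQeq, hQirr⟩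
    exact Finset.notMem_erase γ P (hQR this)
  · intro hne Q hQ
    by_contra hγQ
    apply hne
    intro ω hs
    have hsQ : satF ω Q := by
      intro d hd
      exact hs d (Finset.mem_erase.mpr ⟨fun h => hγQ (h ▸ hd), hQ.1 hd⟩)
    exact (hQ.2.1 ω).1 hsQ γ hγ
end

section
/- If Π \ {γ} entails γ, then there exists an IES of Π that does not contain γ. -/
open scoped Classical

/-- If P \ {γ} entails γ, then some IES of P does not contain γ. -/
theorem exists_IES_not_containing (P : Finset Clause) (γ : Clause) (hγ : γ ∈ P)
    (hnt : ∀ c ∈ P, nonTaut c) (h : entails (P.erase γ) γ) :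
    ∃ Q, IES P Q ∧ γ ∉ Q := by
  classical
  -- The set of subsets of P.erase γ equivalent to P
  have herase : equivF (P.erase γ) P := by
    intro ω
    constructor
    · intro hω c hc
      by_cases hcγ : c = γ
      · subst hcγ; exact h ω hω
      · exact hω c (Finset.mem_erase.mpr ⟨hcγ, hc⟩)
    · intro hω c hc
      exact hω c (Finset.mem_erase.mp hc).2
  let S : Finset (Finset Clause) := (P.erase γ).powerset.filter (fun Q => equivF Q P)
  have hSne : (P.erase γ) ∈ S := by
    simp only [S, Finset.mem_filter, Finset.mem_powerset]
    exact ⟨le_refl _, herase⟩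
  obtain ⟨Q, hQS, hQmin⟩ := S.exists_min_image Finset.card ⟨_, hSne⟩
  simp only [S, Finset.mem_filter, Finset.mem_powerset] at hQS
  obtain ⟨hQsub, hQequiv⟩ := hQS
  refine ⟨Q, ⟨hQsub.trans (Finset.erase_subset _ _), hQequiv, ?_⟩, ?_⟩
  · intro δ hδ hent
    have hQ' : equivF (Q.erase δ) P := by
      intro ω
      constructor
      · intro hω
        have hQω : satF ω Q := by
          intro c hc
          by_cases hcδ : c = δ
          · subst hcδ; exact hent ω hω
          · exact hω c (Finset.mem_erase.mpr ⟨hcδ, hc⟩)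
        exact (hQequiv ω).mp hQω
      · intro hω c hc
        exact (hQequiv ω).mpr hω c (Finset.mem_erase.mp hc).2
    have hmem : Q.erase δ ∈ S := by
      simp only [S, Finset.mem_filter, Finset.mem_powerset]
      exact ⟨(Finset.erase_subset _ _).trans hQsub, hQ'⟩
    have := hQmin _ hmem
    have hlt : (Q.erase δ).card < Q.card := Finset.card_erase_lt_of_mem hδ
    omega
  · intro hγQ
    exact (Finset.mem_erase.mp (hQsub hγQ)).1 rfl
end

section
/- A finite set of clauses Π has exactly one IES if and only if the set Π_N of necessary clauses of Π (those γ ∈ Π with Π \ {γ} ⊭ γ) is equivalent to Π; moreover in that case Π_N is the unique IES. -/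
open scoped Classical

/-- The set of necessary clauses of P. -/
noncomputable def necSet (P : Finset Clause) : Finset Clause :=
  P.filter fun γ => ¬ entails (P.erase γ) γ


lemma satF_mono {ω : Assignment} {Q P : Finset Clause} (h : Q ⊆ P) (hP : satF ω P) :
    satF ω Q := fun c hc => hP c (h hc)

lemma entails_mono {Q P : Finset Clause} {γ : Clause} (h : Q ⊆ P)
    (he : entails Q γ) : entails P γ := fun ω hω => he ω (satF_mono h hω)

lemma IES_of_erase {P Q : Finset Clause} {γ : Clause} (hγ : γ ∈ P)
    (hent : entails (P.erase γ) γ) (h : IES (P.erase γ) Q) : IES P Q := by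
  obtain ⟨hsub, heq, hirr⟩ := h
  refine ⟨hsub.trans (Finset.erase_subset _ _), ?_, hirr⟩
  intro ω
  constructor
  · intro hω c hc
    by_cases hcγ : c = γ
    · subst hcγ; exact hent ω ((heq ω).1 hω)
    · exact (heq ω).1 hω c (Finset.mem_erase.2 ⟨hcγ, hc⟩)
  · intro hω
    exact (heq ω).2 (satF_mono (Finset.erase_subset _ _) hω)

lemma exists_IES (P : Finset Clause) : ∃ Q, IES P Q := by
  induction P using Finset.strongInduction with
  | _ P ih =>
    by_cases h : irredundant P
    · exact ⟨P, Finset.Subset.refl P, fun ω => Iff.rfl, h⟩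
    · simp only [irredundant, not_forall, not_not] at h
      obtain ⟨γ, hγ, hent⟩ := h
      obtain ⟨Q, hQ⟩ := ih (P.erase γ) (Finset.erase_ssubset hγ)
      exact ⟨Q, IES_of_erase hγ hent hQ⟩

lemma necSet_subset_IES {P Q : Finset Clause} (h : IES P Q) : necSet P ⊆ Q := by
  intro γ hγ
  rw [necSet, Finset.mem_filter] at hγ
  obtain ⟨hγP, hne⟩ := hγ
  by_contra hγQ
  refine hne (fun ω hω => ?_)
  have hQsub : Q ⊆ P.erase γ := fun c hc =>
    Finset.mem_erase.2 ⟨fun hcγ => hγQ (hcγ ▸ hc), h.1 hc⟩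
  exact (h.2.1 ω).1 (satF_mono hQsub hω) γ hγP

lemma irredundant_necSet (P : Finset Clause) : irredundant (necSet P) := by
  intro γ hγ hent
  rw [necSet, Finset.mem_filter] at hγ
  refine hγ.2 (entails_mono ?_ hent)
  exact Finset.erase_subset_erase _ (Finset.filter_subset _ _)

/-- P has a unique IES iff the set of necessary clauses is equivalent to P,
and in that case the set of necessary clauses is the unique IES. -/
theorem unique_IES_iff_necSet_equiv (P : Finset Clause) (hnt : ∀ c ∈ P, nonTaut c) :
    ((∃! Q, IES P Q) ↔ equivF (necSet P) P) ∧
      (equivF (necSet P) P → IES P (necSet P) ∧ ∀ Q, IES P Q → Q = necSet P) := by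
  have key : equivF (necSet P) P → IES P (necSet P) ∧ ∀ Q, IES P Q → Q = necSet P := by
    intro heq
    have hIES : IES P (necSet P) := ⟨Finset.filter_subset _ _, heq, irredundant_necSet P⟩
    refine ⟨hIES, fun Q hQ => ?_⟩
    apply Finset.Subset.antisymm _ (necSet_subset_IES hQ)
    intro γ hγQ
    by_contra hγn
    have hγP : γ ∈ P := hQ.1 hγQ
    have hent : entails (P.erase γ) γ := by
      by_contra hne
      exact hγn (Finset.mem_filter.2 ⟨hγP, hne⟩)
    refine hQ.2.2 γ hγQ (fun ω hω => ?_)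
    have hsub : necSet P ⊆ Q.erase γ := fun c hc =>
      Finset.mem_erase.2 ⟨fun hcγ => hγn (hcγ ▸ hc), necSet_subset_IES hQ hc⟩
    exact (heq ω).1 (satF_mono hsub hω) γ hγP
  refine ⟨⟨fun huniq => ?_, fun heq => ⟨necSet P, (key heq).1, fun Q hQ => (key heq).2 Q hQ⟩⟩, key⟩
  obtain ⟨Q₀, hQ₀, huniq⟩ := huniq
  have hQeq : Q₀ = necSet P := by
    apply Finset.Subset.antisymm _ (necSet_subset_IES hQ₀)
    intro γ hγQ
    by_contra hγn
    have hγP : γ ∈ P := hQ₀.1 hγQ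
    have hent : entails (P.erase γ) γ := by
      by_contra hne
      exact hγn (Finset.mem_filter.2 ⟨hγP, hne⟩)
    obtain ⟨Q', hQ'⟩ := exists_IES (P.erase γ)
    have hQ'IES : IES P Q' := IES_of_erase hγP hent hQ'
    have : Q' = Q₀ := huniq Q' hQ'IES
    exact absurd (hQ'.1 (this ▸ hγQ)) (by simp)
  exact hQeq ▸ hQ₀.2.1
end

section
/- If Π \ {γ₁} ≡ Π, Π \ {γ₂} ≡ Π, but Π \ {γ₁, γ₂} ≢ Π (where γ₁ ≠ γ₂ are clauses of Π), then Π has at least two distinct IES's: one containing γ₁ but not γ₂, and one containing γ₂ but not γ₁. -/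
open scoped Classical

lemma extract_IES : ∀ n (Q P₀ : Finset Clause), Q.card ≤ n → Q ⊆ P₀ → equivF Q P₀ →
    ∃ R, R ⊆ Q ∧ equivF R P₀ ∧ irredundant R := by
  intro n
  induction n with
  | zero =>
    intro Q P₀ hc _ heq
    have hQ : Q = ∅ := Finset.card_eq_zero.mp (Nat.le_zero.mp hc)
    subst hQ
    exact ⟨∅, subset_rfl, heq, fun γ hγ => by simp at hγ⟩
  | succ n ih =>
    intro Q P₀ hc hsub heq
    by_cases h : irredundant Q
    · exact ⟨Q, subset_rfl, heq, h⟩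
    · simp only [irredundant, not_forall, not_not] at h
      obtain ⟨γ, hγ, hent⟩ := h
      have heq' : equivF (Q.erase γ) P₀ := by
        intro ω
        constructor
        · intro hω
          refine (heq ω).mp ?_
          intro c hc'
          by_cases hcγ : c = γ
          · exact hcγ ▸ hent ω hω
          · exact hω c (Finset.mem_erase.mpr ⟨hcγ, hc'⟩)
        · intro hω c hc'
          exact (heq ω).mpr hω c (Finset.mem_of_mem_erase hc')
      have hcard : (Q.erase γ).card ≤ n := by
        have := Finset.card_erase_of_mem hγ
        omega
      obtain ⟨R, hR1, hR2, hR3⟩ := ih (Q.erase γ) P₀ hcard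
        ((Finset.erase_subset _ _).trans hsub) heq'
      exact ⟨R, hR1.trans (Finset.erase_subset _ _), hR2, hR3⟩

/-- If removing either of two distinct clauses preserves equivalence but removing
both does not, then P has two distinct IES's, one containing γ₁ but not γ₂ and vice versa. -/
theorem two_IES_of_choice (P : Finset Clause) (γ₁ γ₂ : Clause)
    (hnt : ∀ c ∈ P, nonTaut c)
    (h₁ : γ₁ ∈ P) (h₂ : γ₂ ∈ P) (hne : γ₁ ≠ γ₂)
    (e₁ : equivF (P.erase γ₁) P) (e₂ : equivF (P.erase γ₂) P)
    (e₁₂ : ¬ equivF ((P.erase γ₁).erase γ₂) P) :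
    ∃ Q₁ Q₂, IES P Q₁ ∧ IES P Q₂ ∧ γ₁ ∈ Q₁ ∧ γ₂ ∉ Q₁ ∧ γ₂ ∈ Q₂ ∧ γ₁ ∉ Q₂ := by
  obtain ⟨Q₁, hQ1sub, hQ1eq, hQ1irr⟩ :=
    extract_IES (P.erase γ₂).card (P.erase γ₂) P le_rfl (Finset.erase_subset _ _) e₂
  obtain ⟨Q₂, hQ2sub, hQ2eq, hQ2irr⟩ :=
    extract_IES (P.erase γ₁).card (P.erase γ₁) P le_rfl (Finset.erase_subset _ _) e₁
  have hγ₂Q₁ : γ₂ ∉ Q₁ := fun h => (Finset.mem_erase.mp (hQ1sub h)).1 rfl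
  have hγ₁Q₂ : γ₁ ∉ Q₂ := fun h => (Finset.mem_erase.mp (hQ2sub h)).1 rfl
  have key : ∀ R : Finset Clause, R ⊆ (P.erase γ₁).erase γ₂ → equivF R P → False := by
    intro R hRsub hReq
    apply e₁₂
    intro ω
    constructor
    · intro hω
      exact (hReq ω).mp (fun c hc => hω c (hRsub hc))
    · intro hω c hc
      exact hω c (Finset.mem_of_mem_erase (Finset.mem_of_mem_erase hc))
  have hγ₁Q₁ : γ₁ ∈ Q₁ := by
    by_contra h
    refine key Q₁ ?_ hQ1eq
    intro c hc
    have hcP2 := Finset.mem_erase.mp (hQ1sub hc)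
    exact Finset.mem_erase.mpr ⟨hcP2.1, Finset.mem_erase.mpr ⟨fun hceq => h (hceq ▸ hc), hcP2.2⟩⟩
  have hγ₂Q₂ : γ₂ ∈ Q₂ := by
    by_contra h
    refine key Q₂ ?_ hQ2eq
    intro c hc
    exact Finset.mem_erase.mpr ⟨fun hceq => h (hceq ▸ hc), hQ2sub hc⟩
  exact ⟨Q₁, Q₂,
    ⟨hQ1sub.trans (Finset.erase_subset _ _), hQ1eq, hQ1irr⟩,
    ⟨hQ2sub.trans (Finset.erase_subset _ _), hQ2eq, hQ2irr⟩,
    hγ₁Q₁, hγ₂Q₁, hγ₂Q₂, hγ₁Q₂⟩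
end

section
/- With Γ, C as above and a a further fresh variable, let Γ[C,a] = Γ[C] ∪ { ¬c₁ ∨ ⋯ ∨ ¬c_m ∨ ¬a }. Then: (1) no clause of Γ[C] is redundant in Γ[C,a]; (2) the clause ¬c₁ ∨ ⋯ ∨ ¬c_m ∨ ¬a is entailed by Γ[C] if and only if Γ is unsatisfiable. -/
open scoped Classical

/-- The clause `c i → γ i`, i.e. `¬c_i ∨ γ_i`. -/
def clOf {m : ℕ} (c : Fin m → ℕ) (γ : Fin m → Clause) (i : Fin m) : Clause :=
  insert (c i, false) (γ i)

/-- The irredundant version `Γ[C]` of a set of clauses. -/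
def GC {m : ℕ} (c : Fin m → ℕ) (γ : Fin m → Clause) : Finset Clause :=
  Finset.univ.image (clOf c γ)

/-- The clause ¬c₁ ∨ ⋯ ∨ ¬c_m ∨ ¬a. -/
def bigCl {m : ℕ} (c : Fin m → ℕ) (a : ℕ) : Clause :=
  insert (a, false) (Finset.univ.image fun i : Fin m => (c i, false))

/-- Γ[C,a] = Γ[C] ∪ {¬c₁ ∨ ⋯ ∨ ¬c_m ∨ ¬a}. -/
def GCa {m : ℕ} (c : Fin m → ℕ) (γ : Fin m → Clause) (a : ℕ) : Finset Clause :=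
  insert (bigCl c a) (GC c γ)

/-- (1) no clause of Γ[C] is redundant in Γ[C,a];
(2) Γ[C] entails ¬c₁ ∨ ⋯ ∨ ¬c_m ∨ ¬a iff Γ is unsatisfiable. -/
theorem GCa_properties {m : ℕ} (c : Fin m → ℕ) (γ : Fin m → Clause) (a : ℕ)
    (hinj : Function.Injective c)
    (ha : ∀ i, a ≠ c i)
    (hfreshc : ∀ i j : Fin m, ∀ l ∈ γ j, l.1 ≠ c i)
    (hfresha : ∀ j : Fin m, ∀ l ∈ γ j, l.1 ≠ a)
    (hnt : ∀ i, nonTaut (γ i)) :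
    (∀ i : Fin m, ¬ entails ((GCa c γ a).erase (clOf c γ i)) (clOf c γ i)) ∧
      (entails (GC c γ) (bigCl c a) ↔ ¬ ∃ ω : Assignment, ∀ i, satC ω (γ i)) := by
  constructor
  · intro i hent
    classical
    set ω : Assignment := fun v =>
      if v = a then false
      else if v = c i then true
      else if ∃ j, v = c j then false
      else decide ((v, false) ∈ γ i) with hωdef
    have hsat : satF ω ((GCa c γ a).erase (clOf c γ i)) := by
      intro d hd
      rcases Finset.mem_erase.mp hd with ⟨hne, hd⟩
      rcases Finset.mem_insert.mp hd with h | h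
      · subst h
        refine ⟨(a, false), Finset.mem_insert_self _ _, ?_⟩
        simp [hωdef]
      · rcases Finset.mem_image.mp h with ⟨j, -, rfl⟩
        have hji : j ≠ i := by rintro rfl; exact hne rfl
        refine ⟨(c j, false), Finset.mem_insert_self _ _, ?_⟩
        have h1 : c j ≠ a := fun h => ha j h.symm
        have h2 : c j ≠ c i := fun h => hji (hinj h)
        show (if c j = a then false else if c j = c i then true
          else if ∃ k, c j = c k then false else decide ((c j, false) ∈ γ i)) = false
        rw [if_neg h1, if_neg h2, if_pos ⟨j, rfl⟩]
    rcases hent ω hsat with ⟨l, hl, hωl⟩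
    rcases Finset.mem_insert.mp hl with rfl | hl
    · have h1 : c i ≠ a := fun h => ha i h.symm
      simp [hωdef, h1] at hωl
    · have h1 : l.1 ≠ a := hfresha i l hl
      have h2 : ∀ j, l.1 ≠ c j := fun j => hfreshc j i l hl
      have : ω l.1 = decide ((l.1, false) ∈ γ i) := by
        show (if l.1 = a then false else if l.1 = c i then true
          else if ∃ k, l.1 = c k then false else decide ((l.1, false) ∈ γ i)) = _
        rw [if_neg h1, if_neg (h2 i), if_neg (by rintro ⟨k, hk⟩; exact h2 k hk)]
      rw [this] at hωl
      rcases l with ⟨v, b⟩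
      cases b
      · simp at hωl
        exact hωl hl
      · simp at hωl
        exact hnt i v ⟨hl, hωl⟩
  · constructor
    · rintro hent ⟨ω, hω⟩
      classical
      set ω' : Assignment := fun v => if v = a ∨ ∃ j, v = c j then true else ω v with hω'def
      have h1 : satF ω' (GC c γ) := by
        intro d hd
        rcases Finset.mem_image.mp hd with ⟨j, -, rfl⟩
        rcases hω j with ⟨l, hl, hlv⟩
        refine ⟨l, Finset.mem_insert_of_mem hl, ?_⟩
        have : ω' l.1 = ω l.1 := by
          have h1 : l.1 ≠ a := hfresha j l hl
          have h2 : ∀ k, l.1 ≠ c k := fun k => hfreshc k j l hl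
          simp [hω'def, h1]
          exact fun k h => absurd h (h2 k)
        rw [this]; exact hlv
      rcases hent ω' h1 with ⟨l, hl, hlv⟩
      rcases Finset.mem_insert.mp hl with rfl | hl
      · simp [hω'def] at hlv
      · rcases Finset.mem_image.mp hl with ⟨j, -, rfl⟩
        have : ω' (c j) = true := if_pos (Or.inr ⟨j, rfl⟩)
        rw [this] at hlv
        simp at hlv
    · intro hunsat ω hω
      by_cases h : ∀ j, ω (c j) = true
      · exfalso
        apply hunsat
        refine ⟨ω, fun j => ?_⟩
        rcases hω (clOf c γ j) (Finset.mem_image.mpr ⟨j, Finset.mem_univ _, rfl⟩)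
          with ⟨l, hl, hlv⟩
        rcases Finset.mem_insert.mp hl with rfl | hl
        · rw [h j] at hlv; simp at hlv
        · exact ⟨l, hl, hlv⟩
      · push_neg at h
        rcases h with ⟨j, hj⟩
        refine ⟨(c j, false), Finset.mem_insert_of_mem
          (Finset.mem_image.mpr ⟨j, Finset.mem_univ _, rfl⟩), ?_⟩
        simpa using hj
end

section
/- For any finite set of non-tautological clauses Γ over variables X disjoint from C and a, the set Γ[C,a] = { ¬c_i ∨ γ_i } ∪ { ¬c₁ ∨ ⋯ ∨ ¬c_m ∨ ¬a } is irredundant if and only if Γ is satisfiable. -/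
open scoped Classical

/-- Γ[C,a] is irredundant iff Γ is satisfiable. -/
theorem GCa_irredundant_iff_sat {m : ℕ} (c : Fin m → ℕ) (γ : Fin m → Clause) (a : ℕ)
    (hinj : Function.Injective c)
    (ha : ∀ i, a ≠ c i)
    (hfreshc : ∀ i j : Fin m, ∀ l ∈ γ j, l.1 ≠ c i)
    (hfresha : ∀ j : Fin m, ∀ l ∈ γ j, l.1 ≠ a)
    (hnt : ∀ i, nonTaut (γ i)) :
    irredundant (GCa c γ a) ↔ ∃ ω : Assignment, ∀ i, satC ω (γ i) := by

  have hbig_notin : bigCl c a ∉ GC c γ := by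
    simp only [GC, Finset.mem_image, Finset.mem_univ, true_and]
    rintro ⟨i, hi⟩
    have h0 : (a, false) ∈ clOf c γ i := by
      rw [hi]; exact Finset.mem_insert_self _ _
    rcases Finset.mem_insert.1 h0 with h | h
    · exact ha i (by simpa using congrArg Prod.fst h)
    · exact hfresha i _ h rfl
  have herase : (GCa c γ a).erase (bigCl c a) = GC c γ :=
    Finset.erase_insert hbig_notin
  constructor
  · intro hirr
    by_contra hns
    push_neg at hns
    apply hirr (bigCl c a) (Finset.mem_insert_self _ _)
    rw [herase]
    intro ω hω
    by_cases hall : ∀ i, ω (c i) = true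
    · exfalso
      obtain ⟨i, hi⟩ := hns ω
      apply hi
      have hsc : satC ω (clOf c γ i) :=
        hω _ (Finset.mem_image.2 ⟨i, Finset.mem_univ _, rfl⟩)
      obtain ⟨l, hl, hle⟩ := hsc
      rcases Finset.mem_insert.1 hl with h | h
      · rw [h] at hle; simp [hall i] at hle
      · exact ⟨l, h, hle⟩
    · push_neg at hall
      obtain ⟨i, hi⟩ := hall
      refine ⟨(c i, false), Finset.mem_insert.2 (Or.inr (Finset.mem_image.2 ⟨i, Finset.mem_univ _, rfl⟩)), ?_⟩
      simpa using hi
  · rintro ⟨ω, hω⟩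
    intro δ hδ hent
    rcases Finset.mem_insert.1 hδ with rfl | hδ
    · set ω' : Assignment := fun x => if x = a ∨ ∃ i, x = c i then true else ω x with hω'
      have hsat : satF ω' ((GCa c γ a).erase (bigCl c a)) := by
        rw [herase]
        intro cl hcl
        obtain ⟨i, -, rfl⟩ := Finset.mem_image.1 hcl
        obtain ⟨l, hl, hle⟩ := hω i
        refine ⟨l, Finset.mem_insert.2 (Or.inr hl), ?_⟩
        have hno : ¬ (l.1 = a ∨ ∃ j, l.1 = c j) := by
          rintro (h | ⟨j, h⟩)
          · exact hfresha i l hl h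
          · exact hfreshc j i l hl h
        have heq : ω' l.1 = ω l.1 := by
          simp only [hω']; exact if_neg hno
        rw [heq]; exact hle
      obtain ⟨l, hl, hle⟩ := hent ω' hsat
      rcases Finset.mem_insert.1 hl with rfl | h
      · have : ω' a = true := by simp [hω']
        rw [this] at hle; exact Bool.noConfusion hle
      · obtain ⟨i, -, rfl⟩ := Finset.mem_image.1 h
        have : ω' (c i) = true := by
          show (if _ then _ else _) = true
          exact if_pos (Or.inr ⟨i, rfl⟩)
        rw [this] at hle; exact Bool.noConfusion hle
    · obtain ⟨i, -, rfl⟩ := Finset.mem_image.1 hδ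
      set ω' : Assignment := fun x =>
        if x = c i then true else if (x, true) ∈ γ i then false
        else if (x, false) ∈ γ i then true else false with hω'
      have hsat : satF ω' ((GCa c γ a).erase (clOf c γ i)) := by
        intro cl hcl
        have hcl' := Finset.mem_of_mem_erase hcl
        have hne := Finset.ne_of_mem_erase hcl
        rcases Finset.mem_insert.1 hcl' with rfl | h
        · refine ⟨(a, false), Finset.mem_insert_self _ _, ?_⟩
          have h1 : a ≠ c i := ha i
          have h2 : (a, true) ∉ γ i := fun h => hfresha i _ h rfl
          have h3 : (a, false) ∉ γ i := fun h => hfresha i _ h rfl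
          simp [hω', h1, h2, h3]
        · obtain ⟨j, -, rfl⟩ := Finset.mem_image.1 h
          have hji : j ≠ i := by rintro rfl; exact hne rfl
          refine ⟨(c j, false), Finset.mem_insert_self _ _, ?_⟩
          have h1 : c j ≠ c i := fun h => hji (hinj h)
          have h2 : (c j, true) ∉ γ i := fun h => hfreshc j i _ h rfl
          have h3 : (c j, false) ∉ γ i := fun h => hfreshc j i _ h rfl
          simp [hω', h1, h2, h3]
      obtain ⟨l, hl, hle⟩ := hent ω' hsat
      rcases Finset.mem_insert.1 hl with rfl | h
      · simp [hω'] at hle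
      · have h1 : l.1 ≠ c i := hfreshc i i l h
        rcases l with ⟨v, b⟩
        cases b
        · have h2 : (v, true) ∉ γ i := fun ht => hnt i v ⟨ht, h⟩
          simp [hω', h1, h2, h] at hle
        · simp [hω', h1, h] at hle
end

section
/- For every n ≥ 1 there exists a set of clauses with 4n clauses over 3n variables that has exactly 2ⁿ distinct IES's. Specifically, Π_n = ⋃_{i=1}^n { a_i ∨ ¬b_i, ¬a_i ∨ b_i, a_i ∨ c_i, b_i ∨ c_i } has 2ⁿ IES's, obtained by choosing for each i whether to delete a_i ∨ c_i or b_i ∨ c_i. -/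
open scoped Classical

/-- The clause a_i ∨ ¬b_i, with a_i = 3i, b_i = 3i+1, c_i = 3i+2. -/
def abC (i : ℕ) : Clause := {(3*i, true), (3*i+1, false)}
/-- The clause ¬a_i ∨ b_i. -/
def baC (i : ℕ) : Clause := {(3*i, false), (3*i+1, true)}
/-- The clause a_i ∨ c_i. -/
def acC (i : ℕ) : Clause := {(3*i, true), (3*i+2, true)}
/-- The clause b_i ∨ c_i. -/
def bcC (i : ℕ) : Clause := {(3*i+1, true), (3*i+2, true)}

/-- Π_n = ⋃_{i<n} { a_i ∨ ¬b_i, ¬a_i ∨ b_i, a_i ∨ c_i, b_i ∨ c_i }. -/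
def PiN (n : ℕ) : Finset Clause :=
  (Finset.range n).biUnion fun i => {abC i, baC i, acC i, bcC i}

/-- The subset of Π_n obtained by deleting, for each i, either a_i ∨ c_i or b_i ∨ c_i
according to the choice function f. -/
def delSet (n : ℕ) (f : Fin n → Bool) : Finset Clause :=
  PiN n \ (Finset.univ.image fun i : Fin n => if f i then acC i.1 else bcC i.1)

/-!
The clauses of block `i` mention only `a_i, b_i, c_i`, and each contains a positive literal, so
an assignment that is true outside block `i` can only falsify clauses of block `i`. Within a
block, `a_i ∨ ¬b_i` and `¬a_i ∨ b_i` say `a_i ↔ b_i`, under which `a_i ∨ c_i` and `b_i ∨ c_i`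
are equivalent. The assignments `(a_i, b_i, c_i) = (0,1,1)`, `(1,0,1)`, `(0,0,0)` falsify exactly
`a_i ∨ ¬b_i`, exactly `¬a_i ∨ b_i`, and exactly the pair `a_i ∨ c_i`, `b_i ∨ c_i`. Hence an
equivalent subset keeps both biconditional clauses and at least one of the other two, and it is
irredundant iff it keeps exactly one of them.
-/

theorem Finset.pair_eq_pair_iff {α : Type*} [DecidableEq α] {x y z w : α} :
    ({x, y} : Finset α) = {z, w} ↔ x = z ∧ y = w ∨ x = w ∧ y = z := by
  rw [← Finset.coe_inj, Finset.coe_pair, Finset.coe_pair, Set.pair_eq_pair_iff]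

section CNF

variable {P Q : Finset Clause} {ω : Assignment} {γ : Clause}

noncomputable def falsified (ω : Assignment) (P : Finset Clause) : Finset Clause :=
  P.filter fun c => ¬ satC ω c

theorem satF_iff_disjoint_falsified (hQ : Q ⊆ P) : satF ω Q ↔ Disjoint Q (falsified ω P) := by
  simp only [satF, falsified, Finset.disjoint_left, Finset.mem_filter, not_and, not_not]
  exact ⟨fun h c hc _ => h c hc, fun h c hc => h hc (hQ hc)⟩

theorem not_disjoint_falsified_of_equivF (hQ : Q ⊆ P) (hQP : equivF Q P)
    (hω : (falsified ω P).Nonempty) : ¬ Disjoint Q (falsified ω P) := by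
  intro hd
  obtain ⟨c, hc⟩ := hω
  rw [falsified, Finset.mem_filter] at hc
  exact hc.2 ((hQP ω).1 ((satF_iff_disjoint_falsified hQ).2 hd) c hc.1)

theorem not_entails_erase_of_disjoint_falsified (hQ : Q ⊆ P) (hγ : γ ∈ falsified ω P)
    (hd : Disjoint (Q.erase γ) (falsified ω P)) : ¬ entails (Q.erase γ) γ := fun h =>
  (Finset.mem_filter.1 hγ).2
    (h ω ((satF_iff_disjoint_falsified ((Q.erase_subset γ).trans hQ)).2 hd))

theorem equivF_of_subset_of_entails (hQ : Q ⊆ P) (h : ∀ γ ∈ P, entails Q γ) : equivF Q P :=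
  fun ω => ⟨fun hω γ hγ => h γ hγ ω hω, fun hω c hc => hω c (hQ hc)⟩

theorem entails_of_mem (hγ : γ ∈ Q) : entails Q γ := fun _ hω => hω γ hγ

end CNF

section Blocks

variable {i j n : ℕ}

theorem abC_ne_baC : abC i ≠ baC j := by simp [abC, baC, Finset.pair_eq_pair_iff]; omega
theorem abC_ne_acC : abC i ≠ acC j := by simp [abC, acC, Finset.pair_eq_pair_iff]
theorem abC_ne_bcC : abC i ≠ bcC j := by simp [abC, bcC, Finset.pair_eq_pair_iff]
theorem baC_ne_acC : baC i ≠ acC j := by simp [baC, acC, Finset.pair_eq_pair_iff]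
theorem baC_ne_bcC : baC i ≠ bcC j := by simp [baC, bcC, Finset.pair_eq_pair_iff]
theorem acC_ne_bcC : acC i ≠ bcC j := by simp [acC, bcC, Finset.pair_eq_pair_iff]; omega

theorem acC_injective : Function.Injective acC := fun i j h => by
  simp [acC, Finset.pair_eq_pair_iff] at h; omega

theorem bcC_injective : Function.Injective bcC := fun i j h => by
  simp [bcC, Finset.pair_eq_pair_iff] at h; omega

theorem satC_abC {ω : Assignment} : satC ω (abC i) ↔ ω (3*i) = true ∨ ω (3*i+1) = false := by
  simp [satC, abC]
theorem satC_baC {ω : Assignment} : satC ω (baC i) ↔ ω (3*i) = false ∨ ω (3*i+1) = true := by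
  simp [satC, baC]
theorem satC_acC {ω : Assignment} : satC ω (acC i) ↔ ω (3*i) = true ∨ ω (3*i+2) = true := by
  simp [satC, acC]
theorem satC_bcC {ω : Assignment} : satC ω (bcC i) ↔ ω (3*i+1) = true ∨ ω (3*i+2) = true := by
  simp [satC, bcC]

theorem satC_acC_iff_satC_bcC {ω : Assignment} (hab : satC ω (abC i)) (hba : satC ω (baC i)) :
    satC ω (acC i) ↔ satC ω (bcC i) := by
  rw [satC_abC] at hab
  rw [satC_baC] at hba
  rw [satC_acC, satC_bcC]
  cases ha : ω (3*i) <;> cases hb : ω (3*i+1) <;> simp_all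

def block (i : ℕ) : Finset Clause := {abC i, baC i, acC i, bcC i}

theorem PiN_eq_biUnion_block : PiN n = (Finset.range n).biUnion block := rfl

theorem mem_PiN {c : Clause} : c ∈ PiN n ↔ ∃ i < n, c ∈ block i := by
  simp [PiN, block]

theorem block_subset_PiN (hi : i < n) : block i ⊆ PiN n := fun _ hc => mem_PiN.2 ⟨i, hi, hc⟩

theorem card_block : (block i).card = 4 := by
  simp [block, abC_ne_baC, abC_ne_acC, abC_ne_bcC, baC_ne_acC, baC_ne_bcC, acC_ne_bcC]

theorem fst_div_three_of_mem_block {c : Clause} {l : ℕ × Bool} (hc : c ∈ block i) (hl : l ∈ c) :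
    l.1 / 3 = i := by
  simp only [block, Finset.mem_insert, Finset.mem_singleton] at hc
  rcases hc with rfl | rfl | rfl | rfl <;>
    simp only [abC, baC, acC, bcC, Finset.mem_insert, Finset.mem_singleton] at hl <;>
    rcases hl with rfl | rfl <;> omega

theorem exists_pos_mem_of_mem_block {c : Clause} (hc : c ∈ block i) : ∃ v, (v, true) ∈ c := by
  simp only [block, Finset.mem_insert, Finset.mem_singleton] at hc
  rcases hc with rfl | rfl | rfl | rfl
  exacts [⟨3*i, by simp [abC]⟩, ⟨3*i+1, by simp [baC]⟩, ⟨3*i, by simp [acC]⟩,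
    ⟨3*i+1, by simp [bcC]⟩]

theorem card_PiN : (PiN n).card = 4 * n := by
  rw [PiN_eq_biUnion_block, Finset.card_biUnion]
  · simp [card_block, mul_comm]
  · intro i _ j _ hij
    refine Finset.disjoint_left.2 fun c hci hcj => hij ?_
    obtain ⟨v, hv⟩ := exists_pos_mem_of_mem_block hci
    exact (fst_div_three_of_mem_block hci hv).symm.trans (fst_div_three_of_mem_block hcj hv)

end Blocks

section Witnesses

variable {i j n : ℕ} {pa pb pc : Bool}

def blockAsg (i : ℕ) (pa pb pc : Bool) : Assignment := fun v =>
  if v = 3*i then pa else if v = 3*i+1 then pb else if v = 3*i+2 then pc else true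

@[simp] theorem blockAsg_a : blockAsg i pa pb pc (3*i) = pa := by simp [blockAsg]
@[simp] theorem blockAsg_b : blockAsg i pa pb pc (3*i+1) = pb := by simp [blockAsg]
@[simp] theorem blockAsg_c : blockAsg i pa pb pc (3*i+2) = pc := by simp [blockAsg]

theorem blockAsg_of_div_ne {v : ℕ} (hv : v / 3 ≠ i) : blockAsg i pa pb pc v = true := by
  simp only [blockAsg]
  rw [if_neg (by omega), if_neg (by omega), if_neg (by omega)]

theorem satC_blockAsg_of_mem_block {c : Clause} (hc : c ∈ block j) (hji : j ≠ i) :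
    satC (blockAsg i pa pb pc) c := by
  obtain ⟨v, hv⟩ := exists_pos_mem_of_mem_block hc
  exact ⟨_, hv, blockAsg_of_div_ne ((fst_div_three_of_mem_block hc hv).trans_ne hji)⟩

theorem falsified_blockAsg_PiN (hi : i < n) :
    falsified (blockAsg i pa pb pc) (PiN n) = falsified (blockAsg i pa pb pc) (block i) := by
  ext c
  simp only [falsified, Finset.mem_filter, mem_PiN]
  constructor
  · rintro ⟨⟨j, -, hc⟩, hfalse⟩
    obtain rfl : j = i := by_contra fun hji => hfalse (satC_blockAsg_of_mem_block hc hji)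
    exact ⟨hc, hfalse⟩
  · exact fun ⟨hc, hfalse⟩ => ⟨⟨i, hi, hc⟩, hfalse⟩

theorem falsified_blockAsg_false_true_true (hi : i < n) :
    falsified (blockAsg i false true true) (PiN n) = {abC i} := by
  rw [falsified_blockAsg_PiN hi]
  simp [falsified, block, Finset.filter_insert, Finset.filter_singleton, satC_abC, satC_baC,
    satC_acC, satC_bcC]

theorem falsified_blockAsg_true_false_true (hi : i < n) :
    falsified (blockAsg i true false true) (PiN n) = {baC i} := by
  rw [falsified_blockAsg_PiN hi]
  simp [falsified, block, Finset.filter_insert, Finset.filter_singleton, satC_abC, satC_baC,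
    satC_acC, satC_bcC]

theorem falsified_blockAsg_false_false_false (hi : i < n) :
    falsified (blockAsg i false false false) (PiN n) = {acC i, bcC i} := by
  rw [falsified_blockAsg_PiN hi]
  simp [falsified, block, Finset.filter_insert, Finset.filter_singleton, satC_abC, satC_baC,
    satC_acC, satC_bcC]

end Witnesses

section IES

variable {i n : ℕ} {Q : Finset Clause}

theorem entails_acC_of_mem (hab : abC i ∈ Q) (hba : baC i ∈ Q) (hbc : bcC i ∈ Q) :
    entails Q (acC i) := fun _ hω => (satC_acC_iff_satC_bcC (hω _ hab) (hω _ hba)).2 (hω _ hbc)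

theorem entails_bcC_of_mem (hab : abC i ∈ Q) (hba : baC i ∈ Q) (hac : acC i ∈ Q) :
    entails Q (bcC i) := fun _ hω => (satC_acC_iff_satC_bcC (hω _ hab) (hω _ hba)).1 (hω _ hac)

theorem equivF_PiN_iff (hQ : Q ⊆ PiN n) :
    equivF Q (PiN n) ↔ ∀ i < n, abC i ∈ Q ∧ baC i ∈ Q ∧ (acC i ∈ Q ∨ bcC i ∈ Q) := by
  constructor
  · intro hQP i hi
    have hab := not_disjoint_falsified_of_equivF hQ hQP (ω := blockAsg i false true true)
    have hba := not_disjoint_falsified_of_equivF hQ hQP (ω := blockAsg i true false true)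
    have hacbc := not_disjoint_falsified_of_equivF hQ hQP (ω := blockAsg i false false false)
    simp only [falsified_blockAsg_false_true_true hi, falsified_blockAsg_true_false_true hi,
      falsified_blockAsg_false_false_false hi, Finset.insert_nonempty, Finset.singleton_nonempty,
      Finset.disjoint_insert_right, Finset.disjoint_singleton_right, not_not, not_and_or,
      forall_const] at hab hba hacbc
    exact ⟨hab, hba, hacbc⟩
  · intro h
    refine equivF_of_subset_of_entails hQ fun γ hγ => ?_
    obtain ⟨i, hi, hγi⟩ := mem_PiN.1 hγ
    obtain ⟨hab, hba, hacbc⟩ := h i hi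
    simp only [block, Finset.mem_insert, Finset.mem_singleton] at hγi
    rcases hγi with rfl | rfl | rfl | rfl
    · exact entails_of_mem hab
    · exact entails_of_mem hba
    · exact hacbc.elim entails_of_mem (entails_acC_of_mem hab hba)
    · exact hacbc.elim (entails_bcC_of_mem hab hba) entails_of_mem

theorem irredundant_iff_of_subset_PiN (hQ : Q ⊆ PiN n) (h : ∀ i < n, abC i ∈ Q ∧ baC i ∈ Q) :
    irredundant Q ↔ ∀ i < n, ¬ (acC i ∈ Q ∧ bcC i ∈ Q) := by
  constructor
  · rintro hirr i hi ⟨hac, hbc⟩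
    exact hirr _ hac <| entails_acC_of_mem (Finset.mem_erase.2 ⟨abC_ne_acC, (h i hi).1⟩)
      (Finset.mem_erase.2 ⟨baC_ne_acC, (h i hi).2⟩) (Finset.mem_erase.2 ⟨acC_ne_bcC.symm, hbc⟩)
  · intro hnot γ hγ
    obtain ⟨i, hi, hγi⟩ := mem_PiN.1 (hQ hγ)
    simp only [block, Finset.mem_insert, Finset.mem_singleton] at hγi
    rcases hγi with rfl | rfl | rfl | rfl
    · apply not_entails_erase_of_disjoint_falsified hQ (ω := blockAsg i false true true) <;>
        simp [falsified_blockAsg_false_true_true hi]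
    · apply not_entails_erase_of_disjoint_falsified hQ (ω := blockAsg i true false true) <;>
        simp [falsified_blockAsg_true_false_true hi]
    · have hbc : bcC i ∉ Q := fun hbc => hnot i hi ⟨hγ, hbc⟩
      apply not_entails_erase_of_disjoint_falsified hQ (ω := blockAsg i false false false) <;>
        simp [falsified_blockAsg_false_false_false hi, hbc]
    · have hac : acC i ∉ Q := fun hac => hnot i hi ⟨hac, hγ⟩
      apply not_entails_erase_of_disjoint_falsified hQ (ω := blockAsg i false false false) <;>
        simp [falsified_blockAsg_false_false_false hi, hac]

theorem IES_PiN_iff :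
    IES (PiN n) Q ↔ Q ⊆ PiN n ∧ ∀ i < n, abC i ∈ Q ∧ baC i ∈ Q ∧ (acC i ∈ Q ↔ bcC i ∉ Q) := by
  refine ⟨fun ⟨hQ, hequiv, hirr⟩ => ?_, fun ⟨hQ, h⟩ => ?_⟩
  · have h₁ := (equivF_PiN_iff hQ).1 hequiv
    have h₂ := (irredundant_iff_of_subset_PiN hQ fun i hi => ⟨(h₁ i hi).1, (h₁ i hi).2.1⟩).1 hirr
    refine ⟨hQ, fun i hi => ⟨(h₁ i hi).1, (h₁ i hi).2.1, ?_⟩⟩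
    have := (h₁ i hi).2.2
    have := h₂ i hi
    tauto
  · refine ⟨hQ, (equivF_PiN_iff hQ).2 fun i hi => ?_, (irredundant_iff_of_subset_PiN hQ
      fun i hi => ⟨(h i hi).1, (h i hi).2.1⟩).2 fun i hi => ?_⟩
    · have := (h i hi).2.2
      exact ⟨(h i hi).1, (h i hi).2.1, by tauto⟩
    · have := (h i hi).2.2
      tauto

end IES

section DelSet

variable {n : ℕ} {f : Fin n → Bool}

theorem mem_delSet {c : Clause} :
    c ∈ delSet n f ↔ c ∈ PiN n ∧ ∀ i : Fin n, c ≠ if f i then acC i else bcC i := by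
  simp only [delSet, Finset.mem_sdiff, Finset.mem_image, Finset.mem_univ, true_and, not_exists]
  exact and_congr_right fun _ => forall_congr' fun _ => ne_comm

theorem delSet_subset_PiN : delSet n f ⊆ PiN n := Finset.sdiff_subset

theorem abC_mem_delSet {i : ℕ} (hi : i < n) : abC i ∈ delSet n f :=
  mem_delSet.2 ⟨block_subset_PiN hi (by simp [block]), fun j => by
    split <;> [exact abC_ne_acC; exact abC_ne_bcC]⟩

theorem baC_mem_delSet {i : ℕ} (hi : i < n) : baC i ∈ delSet n f :=
  mem_delSet.2 ⟨block_subset_PiN hi (by simp [block]), fun j => by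
    split <;> [exact baC_ne_acC; exact baC_ne_bcC]⟩

theorem acC_mem_delSet {i : Fin n} : acC i ∈ delSet n f ↔ f i = false := by
  simp only [mem_delSet, block_subset_PiN i.2 (by simp [block] : acC i ∈ block i), true_and]
  refine ⟨fun h => ?_, fun hf j => ?_⟩
  · by_contra hf
    exact h i (by simp_all)
  · split_ifs with hj
    · rintro heq
      obtain rfl := Fin.ext (acC_injective heq)
      simp_all
    · exact acC_ne_bcC

theorem bcC_mem_delSet {i : Fin n} : bcC i ∈ delSet n f ↔ f i = true := by
  simp only [mem_delSet, block_subset_PiN i.2 (by simp [block] : bcC i ∈ block i), true_and]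
  refine ⟨fun h => ?_, fun hf j => ?_⟩
  · by_contra hf
    exact h i (by simp_all)
  · split_ifs with hj
    · exact acC_ne_bcC.symm
    · rintro heq
      obtain rfl := Fin.ext (bcC_injective heq)
      simp_all

theorem delSet_injective : Function.Injective (delSet n) := fun f g h => funext fun i => by
  rw [Bool.eq_iff_iff, ← bcC_mem_delSet, ← bcC_mem_delSet, h]

theorem eq_delSet_iff {Q : Finset Clause} :
    Q = delSet n f ↔ Q ⊆ PiN n ∧ ∀ i : Fin n,
      abC i ∈ Q ∧ baC i ∈ Q ∧ (acC i ∈ Q ↔ f i = false) ∧ (bcC i ∈ Q ↔ f i = true) := by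
  constructor
  · rintro rfl
    exact ⟨delSet_subset_PiN, fun i =>
      ⟨abC_mem_delSet i.2, baC_mem_delSet i.2, acC_mem_delSet, bcC_mem_delSet⟩⟩
  · rintro ⟨hQ, h⟩
    have hblock : ∀ i : Fin n, ∀ c ∈ block i, c ∈ Q ↔ c ∈ delSet n f := by
      intro i c hc
      obtain ⟨hab, hba, hac, hbc⟩ := h i
      simp only [block, Finset.mem_insert, Finset.mem_singleton] at hc
      rcases hc with rfl | rfl | rfl | rfl
      · exact iff_of_true hab (abC_mem_delSet i.2)
      · exact iff_of_true hba (baC_mem_delSet i.2)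
      · exact hac.trans acC_mem_delSet.symm
      · exact hbc.trans bcC_mem_delSet.symm
    ext c
    constructor
    · intro hc
      obtain ⟨i, hi, hci⟩ := mem_PiN.1 (hQ hc)
      exact (hblock ⟨i, hi⟩ c hci).1 hc
    · intro hc
      obtain ⟨i, hi, hci⟩ := mem_PiN.1 (delSet_subset_PiN hc)
      exact (hblock ⟨i, hi⟩ c hci).2 hc

end DelSet

theorem PiN_has_two_pow_IES_general (n : ℕ) :
    (PiN n).card = 4 * n ∧
      Function.Injective (delSet n) ∧
      ∀ Q, IES (PiN n) Q ↔ ∃ f : Fin n → Bool, Q = delSet n f := by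
  refine ⟨card_PiN, delSet_injective, fun Q => ?_⟩
  simp only [IES_PiN_iff, eq_delSet_iff]
  constructor
  · rintro ⟨hQ, h⟩
    refine ⟨fun i => decide (bcC i ∈ Q), hQ, fun i => ?_⟩
    obtain ⟨hab, hba, hac⟩ := h i i.2
    simp [hab, hba, hac]
  · rintro ⟨f, hQ, h⟩
    refine ⟨hQ, fun i hi => ?_⟩
    obtain ⟨hab, hba, hac, hbc⟩ := h ⟨i, hi⟩
    simp [hab, hba, hac, hbc]

/-- Π_n has 4n clauses (over 3n variables) and exactly 2^n distinct IES's,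
namely the sets delSet n f for the 2^n choice functions f (f ↦ delSet n f being injective). -/
theorem PiN_has_two_pow_IES (n : ℕ) (hn : 1 ≤ n) :
    (PiN n).card = 4 * n ∧
      Function.Injective (delSet n) ∧
      ∀ Q, IES (PiN n) Q ↔ ∃ f : Fin n → Bool, Q = delSet n f :=
  PiN_has_two_pow_IES_general n
end

section
/- Two propositional formulas Π₁ and Π₂ are var-equivalent with respect to a variable set V if and only if for every cube δ over V (a non-tautological clause mentioning all variables of V), Π₁ ⊨ δ iff Π₂ ⊨ δ. -/
open scoped Classical

/-- A formula (semantically, a predicate on assignments) depends only on the variables in V. -/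
def detOn (V : Finset ℕ) (Γ : Assignment → Prop) : Prop :=
  ∀ ω ω' : Assignment, (∀ v ∈ V, ω v = ω' v) → (Γ ω ↔ Γ ω')

/-- A CNF entails a (semantic) formula. -/
def entailsP (P : Finset Clause) (Γ : Assignment → Prop) : Prop :=
  ∀ ω, satF ω P → Γ ω

/-- Var-equivalence w.r.t. V: the same formulas over V are entailed. -/
def varEquiv (V : Finset ℕ) (P₁ P₂ : Finset Clause) : Prop :=
  ∀ Γ : Assignment → Prop, detOn V Γ → (entailsP P₁ Γ ↔ entailsP P₂ Γ)

/-- The cube over V determined by g: one literal (v, g v) per variable v ∈ V. -/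
def cubeOf (V : Finset ℕ) (g : Assignment) : Clause := V.image fun v => (v, g v)

lemma satC_cube (ω g : Assignment) (V : Finset ℕ) :
    satC ω (cubeOf V g) ↔ ∃ v ∈ V, ω v = g v := by
  simp [satC, cubeOf]

lemma detOn_cube (V : Finset ℕ) (g : Assignment) :
    detOn V (fun ω => satC ω (cubeOf V g)) := by
  intro ω ω' h
  simp only [satC_cube]
  constructor <;> rintro ⟨v, hv, e⟩ <;> exact ⟨v, hv, by rw [← e, h v hv]⟩ 

lemma cubes_mp (V : Finset ℕ) (P₁ P₂ : Finset Clause)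
    (h : ∀ g : Assignment, entails P₁ (cubeOf V g) → entails P₂ (cubeOf V g))
    (Γ : Assignment → Prop) (hΓ : detOn V Γ) (h1 : entailsP P₁ Γ) : entailsP P₂ Γ := by
  intro ω hω
  by_contra hΓω
  have hc : entails P₁ (cubeOf V (fun v => !ω v)) := by
    intro ω' hω'
    rw [satC_cube]
    by_contra hno
    push_neg at hno
    have : ∀ v ∈ V, ω' v = ω v := by
      intro v hv
      have := hno v hv
      cases hb : ω v <;> cases hb' : ω' v <;> simp_all
    exact hΓω ((hΓ ω' ω this).mp (h1 ω' hω'))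
  have := (h _ hc) ω hω
  rw [satC_cube] at this
  obtain ⟨v, _, e⟩ := this
  simp at e

/-- Var-equivalence w.r.t. V holds iff the same cubes over V are entailed. -/
theorem varEquiv_iff_cubes (V : Finset ℕ) (P₁ P₂ : Finset Clause) :
    varEquiv V P₁ P₂ ↔
      ∀ g : Assignment, (entails P₁ (cubeOf V g) ↔ entails P₂ (cubeOf V g)) := by
  constructor
  · intro h g
    exact h (fun ω => satC ω (cubeOf V g)) (detOn_cube V g)
  · intro h Γ hΓ
    constructor
    · exact cubes_mp V P₁ P₂ (fun g => (h g).mp) Γ hΓ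
    · exact cubes_mp V P₂ P₁ (fun g => (h g).mpr) Γ hΓ
end

section
/- Π₁ and Π₂ are var-equivalent w.r.t. V if and only if they have the same var-models over V, where an assignment ω_V to V is a var-model of Π iff it can be extended by an assignment to the remaining variables to a (full) model of Π. -/
open scoped Classical

/-- Var-equivalence w.r.t. V holds iff P₁ and P₂ have the same var-models over V,
where an assignment to V is a var-model of P iff it extends to a full model of P. -/
theorem varEquiv_iff_varModels (V : Finset ℕ) (P₁ P₂ : Finset Clause) :
    varEquiv V P₁ P₂ ↔
      ∀ g : Assignment,
        ((∃ ω, (∀ v ∈ V, ω v = g v) ∧ satF ω P₁) ↔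
          (∃ ω, (∀ v ∈ V, ω v = g v) ∧ satF ω P₂)) := by
  constructor
  · intro h g
    have hdet : detOn V (fun ω => ¬ (∀ v ∈ V, ω v = g v)) := by
      intro ω ω' hag
      constructor
      · intro hn hc; exact hn (fun v hv => (hag v hv).trans (hc v hv))
      · intro hn hc; exact hn (fun v hv => (hag v hv).symm.trans (hc v hv))
    have := h _ hdet
    constructor
    · rintro ⟨ω, hag, hsat⟩
      by_contra hne
      push_neg at hne
      have h2 : entailsP P₂ (fun ω => ¬ (∀ v ∈ V, ω v = g v)) := by
        intro ω' hs hc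
        exact (hne ω' hc) hs
      have h1 := this.mpr h2
      exact (h1 ω hsat) hag
    · rintro ⟨ω, hag, hsat⟩
      by_contra hne
      push_neg at hne
      have h1 : entailsP P₁ (fun ω => ¬ (∀ v ∈ V, ω v = g v)) := by
        intro ω' hs hc
        exact (hne ω' hc) hs
      have h2 := this.mp h1
      exact (h2 ω hsat) hag
  · intro h Γ hdet
    constructor
    · intro h1 ω hs
      obtain ⟨ω', hag, hsat⟩ := (h ω).mpr ⟨ω, fun v _ => rfl, hs⟩
      exact (hdet ω' ω hag).mp (h1 ω' hsat)
    · intro h2 ω hs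
      obtain ⟨ω', hag, hsat⟩ := (h ω).mp ⟨ω, fun v _ => rfl, hs⟩
      exact (hdet ω' ω hag).mp (h2 ω' hsat)
end

section
/- Let Σ be a set of clauses over variables X ∪ Y and a a fresh variable; let (¬a ∨ Σ) = { ¬a ∨ γ : γ ∈ Σ }. Then (¬a ∨ Σ) ∪ {a} is var-equivalent w.r.t. X to (¬a ∨ Σ) if and only if for every assignment to X there exists an assignment to Y making Σ true (i.e., ∀X ∃Y. Σ holds). -/
open scoped Classical

/-- (¬a ∨ Σ) ∪ {a} is var-equivalent w.r.t. X to (¬a ∨ Σ) iff every assignment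
to X can be extended (on Y) to a model of Σ, i.e. ∀X ∃Y. Σ holds. -/
theorem varEquiv_iff_forall_exists (X Y : Finset ℕ) (a : ℕ) (S : Finset Clause)
    (ha : a ∉ X ∪ Y)
    (hvars : ∀ γ ∈ S, ∀ l ∈ γ, l.1 ∈ X ∪ Y) :
    varEquiv X (insert {(a, true)} (S.image fun γ => insert (a, false) γ))
        (S.image fun γ => insert (a, false) γ) ↔
      ∀ g : Assignment, ∃ ω, (∀ v ∈ X, ω v = g v) ∧ satF ω S := by
  have haX : a ∉ X := fun h => ha (Finset.mem_union_left _ h)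
  constructor
  · intro hve g
    by_contra hno
    push_neg at hno
    set Γ : Assignment → Prop := fun ω => ¬ (∀ v ∈ X, ω v = g v) with hΓ
    have hdet : detOn X Γ := by
      intro ω ω' hagree
      simp only [hΓ]
      constructor
      · intro h h'; exact h (fun v hv => (hagree v hv).trans (h' v hv))
      · intro h h'; exact h (fun v hv => (hagree v hv).symm.trans (h' v hv))
    have h1 : entailsP (insert {(a, true)} (S.image fun γ => insert (a, false) γ)) Γ := by
      intro ω hω hωg
      have hωa : ω a = true := by
        have := hω {(a, true)} (Finset.mem_insert_self _ _)
        obtain ⟨l, hl, hval⟩ := this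
        simp only [Finset.mem_singleton] at hl
        subst hl; exact hval
      have hS : satF ω S := by
        intro c hc
        have := hω (insert (a, false) c)
          (Finset.mem_insert_of_mem (Finset.mem_image_of_mem _ hc))
        obtain ⟨l, hl, hval⟩ := this
        rcases Finset.mem_insert.1 hl with h | h
        · subst h; simp [hωa] at hval
        · exact ⟨l, h, hval⟩
      exact hno ω hωg hS
    have h2 := (hve Γ hdet).1 h1
    set ω₀ : Assignment := fun v => if v = a then false else g v with hω₀
    have : Γ ω₀ := by
      apply h2
      intro c hc
      obtain ⟨γ, _, rfl⟩ := Finset.mem_image.1 hc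
      exact ⟨(a, false), Finset.mem_insert_self _ _, by simp [hω₀]⟩
    refine this (fun v hv => ?_)
    have hva : v ≠ a := fun h => haX (h ▸ hv)
    simp [hω₀, hva]
  · intro hfe Γ hdet
    constructor
    · intro h1 ω hω
      obtain ⟨ω', hagree, hS⟩ := hfe ω
      set ω'' : Assignment := fun v => if v = a then true else ω' v with hω''
      have hΓ'' : Γ ω'' := by
        apply h1
        intro c hc
        rcases Finset.mem_insert.1 hc with rfl | hc
        · exact ⟨(a, true), Finset.mem_singleton_self _, by simp [hω'']⟩
        · obtain ⟨γ, hγ, rfl⟩ := Finset.mem_image.1 hc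
          obtain ⟨l, hl, hval⟩ := hS γ hγ
          refine ⟨l, Finset.mem_insert_of_mem hl, ?_⟩
          have hla : l.1 ≠ a := fun h => ha (h ▸ hvars γ hγ l hl)
          simpa [hω'', hla] using hval
      have : ∀ v ∈ X, ω'' v = ω v := by
        intro v hv
        have hva : v ≠ a := fun h => haX (h ▸ hv)
        simp [hω'', hva, hagree v hv]
      exact (hdet ω'' ω this).1 hΓ''
    · intro h2 ω hω
      exact h2 ω (fun c hc => hω c (Finset.mem_insert_of_mem hc))
end

section
/- Given a finite set of clauses Π and a formula Γ, define the revision Π * Γ as the disjunction over all maximal subsets Π' ⊆ Π consistent with Γ of (⋀Π' ∧ Γ). Then the models of Π * Γ are exactly the models ω of Γ such that S_Π(ω) = { γ ∈ Π : ω ⊨ γ } is maximal under set inclusion among { S_Π(ω') : ω' ⊨ Γ }. -/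
open scoped Classical

/-- A set of clauses is consistent with a formula Γ. -/
def consistentWith (Q : Finset Clause) (Γ : Assignment → Prop) : Prop :=
  ∃ ω, Γ ω ∧ satF ω Q

/-- Q is a maximal subset of P consistent with Γ. -/
def maxCons (P : Finset Clause) (Γ : Assignment → Prop) (Q : Finset Clause) : Prop :=
  Q ⊆ P ∧ consistentWith Q Γ ∧ ∀ R, Q ⊂ R → R ⊆ P → ¬ consistentWith R Γ

/-- ω is a model of the revision P * Γ = ⋁_{Q ∈ Max(P,Γ)} (⋀Q ∧ Γ). -/
def revSat (P : Finset Clause) (Γ : Assignment → Prop) (ω : Assignment) : Prop :=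
  ∃ Q, maxCons P Γ Q ∧ Γ ω ∧ satF ω Q

/-- S_P(ω): the clauses of P satisfied by ω. -/
noncomputable def SP (P : Finset Clause) (ω : Assignment) : Finset Clause :=
  P.filter fun γ => satC ω γ

/-- Conditional (strong) equivalence: same result under every revision. -/
def condEquiv (P P' : Finset Clause) : Prop :=
  ∀ Γ : Assignment → Prop, ∀ ω, revSat P Γ ω ↔ revSat P' Γ ω

/-- The models of P * Γ are exactly the models ω of Γ whose satisfied subset
S_P(ω) is maximal under inclusion among { S_P(ω') : ω' ⊨ Γ }. -/
theorem revSat_iff_maximal (P : Finset Clause) (Γ : Assignment → Prop) :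
    ∀ ω, revSat P Γ ω ↔ (Γ ω ∧ ∀ ω', Γ ω' → ¬ SP P ω ⊂ SP P ω') := by
  intro ω
  constructor
  · rintro ⟨Q, ⟨hQP, _, hmax⟩, hΓ, hsat⟩
    refine ⟨hΓ, fun ω' hΓ' hlt => ?_⟩
    have hQω : Q ⊆ SP P ω := fun c hc =>
      Finset.mem_filter.2 ⟨hQP hc, hsat c hc⟩
    exact hmax (SP P ω') (lt_of_le_of_lt hQω hlt)
      (Finset.filter_subset _ _)
      ⟨ω', hΓ', fun c hc => (Finset.mem_filter.1 hc).2⟩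
  · rintro ⟨hΓ, hmax⟩
    refine ⟨SP P ω, ⟨Finset.filter_subset _ _,
      ⟨ω, hΓ, fun c hc => (Finset.mem_filter.1 hc).2⟩, ?_⟩, hΓ,
      fun c hc => (Finset.mem_filter.1 hc).2⟩
    rintro R hlt hRP ⟨ω', hΓ', hsat'⟩
    have hRω' : R ⊆ SP P ω' := fun c hc =>
      Finset.mem_filter.2 ⟨hRP hc, hsat' c hc⟩
    exact hmax ω' hΓ' (lt_of_lt_of_le hlt hRω')
end

section
/- A clause γ ∈ Π is conditionally irredundant in Π (i.e., Π and Π \ {γ} are not strongly equivalent: some revision Π * Γ differs from (Π \ {γ}) * Γ) if and only if there exist two assignments ω and ω' such that the containment relation between S_Π(ω) and S_Π(ω') differs from that between S_{Π\{γ}}(ω) and S_{Π\{γ}}(ω'). -/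
open scoped Classical

lemma satF_SP (P : Finset Clause) (ω : Assignment) : satF ω (SP P ω) := by
  intro c hc
  exact (Finset.mem_filter.mp hc).2

lemma subset_SP {P Q : Finset Clause} {ω : Assignment} (h1 : Q ⊆ P) (h2 : satF ω Q) :
    Q ⊆ SP P ω := fun c hc => Finset.mem_filter.mpr ⟨h1 hc, h2 c hc⟩

lemma revSat_iff (P : Finset Clause) (Γ : Assignment → Prop) (ω : Assignment) :
    revSat P Γ ω ↔ Γ ω ∧ ∀ ω', Γ ω' → ¬ (SP P ω ⊂ SP P ω') := by
  constructor
  · rintro ⟨Q, ⟨hQP, _hcons, hmax⟩, hΓ, hsat⟩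
    refine ⟨hΓ, fun ω' hΓ' hlt => ?_⟩
    have hQ : Q ⊆ SP P ω := subset_SP hQP hsat
    have hlt' : Q ⊂ SP P ω' := lt_of_le_of_lt hQ hlt
    exact hmax (SP P ω') hlt' (Finset.filter_subset _ _) ⟨ω', hΓ', satF_SP P ω'⟩
  · rintro ⟨hΓ, hmax⟩
    refine ⟨SP P ω, ⟨Finset.filter_subset _ _, ⟨ω, hΓ, satF_SP P ω⟩, ?_⟩, hΓ, satF_SP P ω⟩
    rintro R hlt hRP ⟨ω', hΓ', hsat'⟩
    have hR : R ⊆ SP P ω' := subset_SP hRP hsat'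
    exact hmax ω' hΓ' (lt_of_lt_of_le hlt hR)

lemma SP_erase (P : Finset Clause) (γ : Clause) (ω : Assignment) :
    SP (P.erase γ) ω = (SP P ω).erase γ := by
  ext c
  simp only [SP, Finset.mem_filter, Finset.mem_erase]
  tauto

/-- γ ∈ P is conditionally irredundant in P iff some pair of assignments has its
containment relation between satisfied subsets changed by the removal of γ. -/
theorem condIrredundant_iff_ordering (P : Finset Clause) (γ : Clause) (hγ : γ ∈ P) :
    ¬ condEquiv P (P.erase γ) ↔
      ∃ ω ω' : Assignment,
        ¬((SP P ω ⊆ SP P ω') ↔ (SP (P.erase γ) ω ⊆ SP (P.erase γ) ω')) := by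
  constructor
  · intro hne
    by_contra hno
    push_neg at hno
    apply hne
    intro Γ ω
    rw [revSat_iff, revSat_iff]
    have key : ∀ ω₁ ω₂ : Assignment,
        (SP P ω₁ ⊂ SP P ω₂) ↔ (SP (P.erase γ) ω₁ ⊂ SP (P.erase γ) ω₂) := by
      intro ω₁ ω₂
      rw [Finset.ssubset_def, Finset.ssubset_def, hno ω₁ ω₂, hno ω₂ ω₁]
    simp only [key]
  · rintro ⟨ω, ω', hdiff⟩ hce
    have hmono : ∀ a b : Assignment, SP P a ⊆ SP P b →
        SP (P.erase γ) a ⊆ SP (P.erase γ) b := by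
      intro a b h
      rw [SP_erase, SP_erase]
      exact Finset.erase_subset_erase _ h
    have hsub' : SP (P.erase γ) ω ⊆ SP (P.erase γ) ω' := by
      by_contra hB
      have hA : SP P ω ⊆ SP P ω' := by
        by_contra hA
        exact hdiff (iff_of_false hA hB)
      exact hB (hmono _ _ hA)
    have hnsub : ¬ SP P ω ⊆ SP P ω' := fun hA => hdiff (iff_of_true hA hsub')
    obtain ⟨c, hc1, hc2⟩ := Finset.not_subset.mp hnsub
    have hcγ : c = γ := by
      by_contra hne
      have hc' : c ∈ SP (P.erase γ) ω := by
        rw [SP_erase]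
        exact Finset.mem_erase.mpr ⟨hne, hc1⟩
      have hmem : c ∈ (SP P ω').erase γ := by
        rw [← SP_erase]
        exact hsub' hc'
      exact hc2 (Finset.mem_of_mem_erase hmem)
    subst hcγ
    have hSPω' : SP (P.erase c) ω' = SP P ω' := by
      rw [SP_erase]
      exact Finset.erase_eq_of_notMem hc2
    set Γ : Assignment → Prop := fun x => x = ω ∨ x = ω' with hΓdef
    by_cases hcase : SP (P.erase c) ω' ⊆ SP (P.erase c) ω
    · have h1 : revSat (P.erase c) Γ ω' := by
        rw [revSat_iff]
        refine ⟨Or.inr rfl, ?_⟩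
        rintro x (rfl | rfl)
        · rw [Finset.ssubset_def]
          rintro ⟨_, hn⟩
          exact hn hsub'
        · exact fun h => absurd rfl h.ne
      have h2 : ¬ revSat P Γ ω' := by
        rw [revSat_iff]
        rintro ⟨_, hmax⟩
        apply hmax ω (Or.inl rfl)
        rw [Finset.ssubset_def]
        constructor
        · intro d hd
          have hd' : d ∈ SP (P.erase c) ω := hcase (by rw [hSPω']; exact hd)
          rw [SP_erase] at hd'
          exact Finset.mem_of_mem_erase hd'
        · exact hnsub
      exact h2 ((hce Γ ω').mpr h1)
    · have h1 : revSat P Γ ω := by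
        rw [revSat_iff]
        refine ⟨Or.inl rfl, ?_⟩
        rintro x (rfl | rfl)
        · exact fun h => absurd rfl h.ne
        · exact fun h => hnsub h.subset
      have h2 : ¬ revSat (P.erase c) Γ ω := by
        rw [revSat_iff]
        rintro ⟨_, hmax⟩
        exact hmax ω' (Or.inr rfl) (Finset.ssubset_def.mpr ⟨hsub', hcase⟩)
      exact h2 ((hce Γ ω).mp h1)
end

section
/- The sets Π = {a ∨ b, a ∨ ¬b, a ∨ c, a ∨ ¬c} and Π' = {a ∨ b, a ∨ ¬b} are conditionally (strongly) equivalent, yet no single clause of Π is conditionally redundant in Π. -/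
open scoped Classical

-- auxiliary definitions and lemmas

def C1 : Clause := {(0,true),(1,true)}
def C2 : Clause := {(0,true),(1,false)}
def C3 : Clause := {(0,true),(2,true)}
def C4 : Clause := {(0,true),(2,false)}
def PI : Finset Clause := {C1, C2, C3, C4}
def PI' : Finset Clause := {C1, C2}

lemma satC_two (ω : Assignment) (l1 l2 : ℕ × Bool) :
    satC ω {l1, l2} ↔ ω l1.1 = l1.2 ∨ ω l2.1 = l2.2 := by
  simp [satC]

lemma satC1 (ω : Assignment) : satC ω C1 ↔ (ω 0 = true ∨ ω 1 = true) := satC_two ..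
lemma satC2 (ω : Assignment) : satC ω C2 ↔ (ω 0 = true ∨ ω 1 = false) := satC_two ..
lemma satC3 (ω : Assignment) : satC ω C3 ↔ (ω 0 = true ∨ ω 2 = true) := satC_two ..
lemma satC4 (ω : Assignment) : satC ω C4 ↔ (ω 0 = true ∨ ω 2 = false) := satC_two ..

lemma satF_PI (ω : Assignment) : satF ω PI ↔ ω 0 = true := by
  constructor
  · intro h
    have h1 := (satC1 ω).1 (h C1 (by simp [PI]))
    have h2 := (satC2 ω).1 (h C2 (by simp [PI]))
    rcases h1 with h1 | h1
    · exact h1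
    · rcases h2 with h2 | h2
      · exact h2
      · rw [h1] at h2; exact absurd h2 (by simp)
  · intro h c hc
    simp [PI] at hc
    rcases hc with rfl | rfl | rfl | rfl
    · exact (satC1 ω).2 (Or.inl h)
    · exact (satC2 ω).2 (Or.inl h)
    · exact (satC3 ω).2 (Or.inl h)
    · exact (satC4 ω).2 (Or.inl h)

lemma satF_PI' (ω : Assignment) : satF ω PI' ↔ ω 0 = true := by
  constructor
  · intro h
    have h1 := (satC1 ω).1 (h C1 (by simp [PI']))
    have h2 := (satC2 ω).1 (h C2 (by simp [PI']))
    rcases h1 with h1 | h1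
    · exact h1
    · rcases h2 with h2 | h2
      · exact h2
      · rw [h1] at h2; exact absurd h2 (by simp)
  · intro h c hc
    simp [PI'] at hc
    rcases hc with rfl | rfl
    · exact (satC1 ω).2 (Or.inl h)
    · exact (satC2 ω).2 (Or.inl h)

/-- Case 1: if some Γ-model sets a true, revision of P = models of Γ ∧ P. -/
lemma rev_case1 (P : Finset Clause) (hP : ∀ ω, satF ω P ↔ ω 0 = true)
    (Γ : Assignment → Prop) (ω' : Assignment) (hΓ' : Γ ω') (h1 : ω' 0 = true)
    (ω : Assignment) : revSat P Γ ω ↔ Γ ω ∧ ω 0 = true := by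
  constructor
  · rintro ⟨Q, ⟨hQP, -, hmax⟩, hΓω, hsat⟩
    refine ⟨hΓω, ?_⟩
    have hQeq : Q = P := by
      by_contra hne
      exact hmax P (lt_of_le_of_ne hQP hne) le_rfl ⟨ω', hΓ', (hP ω').2 h1⟩
    exact (hP ω).1 (hQeq ▸ hsat)
  · rintro ⟨hΓω, h0⟩
    refine ⟨P, ⟨le_rfl, ⟨ω', hΓ', (hP ω').2 h1⟩, ?_⟩, hΓω, (hP ω).2 h0⟩
    intro R hR hRP
    exact absurd hRP hR.2

lemma mem_SP {P : Finset Clause} {ω : Assignment} {c : Clause} :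
    c ∈ SP P ω ↔ c ∈ P ∧ satC ω c := Finset.mem_filter

/-- Case 2 for PI: if all Γ-models set a false, every Γ-model is a revision model. -/
lemma rev_case2_PI (Γ : Assignment → Prop) (h0 : ∀ ω', Γ ω' → ω' 0 = false)
    (ω : Assignment) (hΓω : Γ ω) : revSat PI Γ ω := by
  refine ⟨SP PI ω, ⟨Finset.filter_subset _ _, ⟨ω, hΓω, satF_SP _ _⟩, ?_⟩, hΓω, satF_SP _ _⟩
  rintro R hQR hRP ⟨ω'', hΓ'', hsat''⟩
  obtain ⟨γ, hγR, hγQ⟩ := Finset.exists_of_ssubset hQR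
  have hγP : γ ∈ PI := hRP hγR
  have hns : ¬ satC ω γ := fun hs => hγQ (mem_SP.2 ⟨hγP, hs⟩)
  have hω0 := h0 ω hΓω
  have hω''0 := h0 ω'' hΓ''
  have hsub : SP PI ω ⊆ R := hQR.subset
  simp [PI] at hγP
  have key : ∀ c ∈ PI, satC ω c → satC ω'' c := fun c hc hs =>
    hsat'' c (hsub (mem_SP.2 ⟨hc, hs⟩))
  rcases hγP with rfl | rfl | rfl | rfl
  · have hb : ω 1 = false := by
      rcases Bool.eq_false_or_eq_true (ω 1) with h | h
      · exact absurd ((satC1 ω).2 (Or.inr h)) hns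
      · exact h
    have h2 : satC ω'' C2 := key C2 (by simp [PI]) ((satC2 ω).2 (Or.inr hb))
    have h1 : satC ω'' C1 := hsat'' _ hγR
    rcases (satC1 ω'').1 h1 with h | h <;> rcases (satC2 ω'').1 h2 with h' | h' <;>
      simp_all
  · have hb : ω 1 = true := by
      rcases Bool.eq_false_or_eq_true (ω 1) with h | h
      · exact h
      · exact absurd ((satC2 ω).2 (Or.inr h)) hns
    have h1 : satC ω'' C1 := key C1 (by simp [PI]) ((satC1 ω).2 (Or.inr hb))
    have h2 : satC ω'' C2 := hsat'' _ hγR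
    rcases (satC1 ω'').1 h1 with h | h <;> rcases (satC2 ω'').1 h2 with h' | h' <;>
      simp_all
  · have hb : ω 2 = false := by
      rcases Bool.eq_false_or_eq_true (ω 2) with h | h
      · exact absurd ((satC3 ω).2 (Or.inr h)) hns
      · exact h
    have h4 : satC ω'' C4 := key C4 (by simp [PI]) ((satC4 ω).2 (Or.inr hb))
    have h3 : satC ω'' C3 := hsat'' _ hγR
    rcases (satC3 ω'').1 h3 with h | h <;> rcases (satC4 ω'').1 h4 with h' | h' <;>
      simp_all
  · have hb : ω 2 = true := by
      rcases Bool.eq_false_or_eq_true (ω 2) with h | h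
      · exact h
      · exact absurd ((satC4 ω).2 (Or.inr h)) hns
    have h3 : satC ω'' C3 := key C3 (by simp [PI]) ((satC3 ω).2 (Or.inr hb))
    have h4 : satC ω'' C4 := hsat'' _ hγR
    rcases (satC3 ω'').1 h3 with h | h <;> rcases (satC4 ω'').1 h4 with h' | h' <;>
      simp_all

lemma rev_case2_PI' (Γ : Assignment → Prop) (h0 : ∀ ω', Γ ω' → ω' 0 = false)
    (ω : Assignment) (hΓω : Γ ω) : revSat PI' Γ ω := by
  refine ⟨SP PI' ω, ⟨Finset.filter_subset _ _, ⟨ω, hΓω, satF_SP _ _⟩, ?_⟩, hΓω, satF_SP _ _⟩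
  rintro R hQR hRP ⟨ω'', hΓ'', hsat''⟩
  obtain ⟨γ, hγR, hγQ⟩ := Finset.exists_of_ssubset hQR
  have hγP : γ ∈ PI' := hRP hγR
  have hns : ¬ satC ω γ := fun hs => hγQ (mem_SP.2 ⟨hγP, hs⟩)
  have hω0 := h0 ω hΓω
  have hω''0 := h0 ω'' hΓ''
  have hsub : SP PI' ω ⊆ R := hQR.subset
  simp [PI'] at hγP
  have key : ∀ c ∈ PI', satC ω c → satC ω'' c := fun c hc hs =>
    hsat'' c (hsub (mem_SP.2 ⟨hc, hs⟩))
  rcases hγP with rfl | rfl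
  · have hb : ω 1 = false := by
      rcases Bool.eq_false_or_eq_true (ω 1) with h | h
      · exact absurd ((satC1 ω).2 (Or.inr h)) hns
      · exact h
    have h2 : satC ω'' C2 := key C2 (by simp [PI']) ((satC2 ω).2 (Or.inr hb))
    have h1 : satC ω'' C1 := hsat'' _ hγR
    rcases (satC1 ω'').1 h1 with h | h <;> rcases (satC2 ω'').1 h2 with h' | h' <;>
      simp_all
  · have hb : ω 1 = true := by
      rcases Bool.eq_false_or_eq_true (ω 1) with h | h
      · exact h
      · exact absurd ((satC2 ω).2 (Or.inr h)) hns
    have h1 : satC ω'' C1 := key C1 (by simp [PI']) ((satC1 ω).2 (Or.inr hb))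
    have h2 : satC ω'' C2 := hsat'' _ hγR
    rcases (satC1 ω'').1 h1 with h | h <;> rcases (satC2 ω'').1 h2 with h' | h' <;>
      simp_all

lemma part1 : condEquiv PI PI' := by
  intro Γ ω
  by_cases hex : ∃ ω', Γ ω' ∧ ω' 0 = true
  · obtain ⟨ω', hΓ', h1⟩ := hex
    rw [rev_case1 PI satF_PI Γ ω' hΓ' h1 ω, rev_case1 PI' satF_PI' Γ ω' hΓ' h1 ω]
  · push_neg at hex
    have h0 : ∀ ω', Γ ω' → ω' 0 = false := fun ω' h =>
      Bool.eq_false_iff.2 (fun ht => hex ω' h ht)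
    constructor
    · rintro ⟨Q, -, hΓω, -⟩; exact rev_case2_PI' Γ h0 ω hΓω
    · rintro ⟨Q, -, hΓω, -⟩; exact rev_case2_PI Γ h0 ω hΓω

def wTT : Assignment := fun n => !(n == 0)
def wFT : Assignment := fun n => n == 2
def wTF : Assignment := fun n => n == 1

lemma part2_helper (γ δ ρ : Clause) (ω ω'' : Assignment)
    (hω0 : ω 0 = false)
    (honly : ∀ c ∈ PI.erase γ, satC ω c → c = δ)
    (hρmem : ρ ∈ PI.erase γ) (hδmem : δ ∈ PI.erase γ) (hρδ : ρ ≠ δ)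
    (hω''0 : ω'' 0 = false) (hρ'' : satC ω'' ρ) (hδ'' : satC ω'' δ) :
    ¬ condEquiv PI (PI.erase γ) := by
  intro hc
  set Γ : Assignment → Prop := fun w => w 0 = false with hΓdef
  have h1 : revSat PI Γ ω := rev_case2_PI Γ (fun _ h => h) ω hω0
  obtain ⟨Q, ⟨hQP, -, hmax⟩, -, hsat⟩ := (hc Γ ω).1 h1
  have hQδ : Q ⊆ {δ} := by
    intro c hcQ
    have := honly c (hQP hcQ) (hsat c hcQ)
    simp [this]
  have hss : Q ⊂ ({ρ, δ} : Finset Clause) := by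
    refine ⟨fun c hcQ => ?_, fun h => ?_⟩
    · have := hQδ hcQ
      simp at this
      simp [this]
    · have : ρ ∈ Q := h (by simp)
      have := hQδ this
      simp at this
      exact hρδ this
  refine hmax {ρ, δ} hss ?_ ⟨ω'', hω''0, ?_⟩
  · intro c hcR
    rcases Finset.mem_insert.1 hcR with rfl | hcR
    · exact hρmem
    · rw [Finset.mem_singleton.1 hcR]; exact hδmem
  · intro c hcR
    rcases Finset.mem_insert.1 hcR with rfl | hcR
    · exact hρ''
    · rw [Finset.mem_singleton.1 hcR]; exact hδ''

lemma part2 : ∀ γ ∈ PI, ¬ condEquiv PI (PI.erase γ) := by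
  intro γ hγ
  have hγ' : γ ∈ PI := hγ
  simp [PI] at hγ'
  rcases hγ' with rfl | rfl | rfl | rfl
  · refine part2_helper C1 C3 C2 wTT wFT rfl ?_ ?_ ?_ ?_ rfl ?_ ?_
    · intro c hcm hs
      rw [Finset.mem_erase] at hcm
      obtain ⟨hne, hcm⟩ := hcm
      simp [PI] at hcm
      rcases hcm with rfl | rfl | rfl | rfl
      · exact absurd rfl hne
      · exact absurd ((satC2 wTT).1 hs) (by decide)
      · rfl
      · exact absurd ((satC4 wTT).1 hs) (by decide)
    · rw [Finset.mem_erase]; exact ⟨by decide, by simp [PI]⟩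
    · rw [Finset.mem_erase]; exact ⟨by decide, by simp [PI]⟩
    · decide
    · exact (satC2 wFT).2 (by decide)
    · exact (satC3 wFT).2 (by decide)
  · refine part2_helper C2 C3 C1 wFT wTT rfl ?_ ?_ ?_ ?_ rfl ?_ ?_
    · intro c hcm hs
      rw [Finset.mem_erase] at hcm
      obtain ⟨hne, hcm⟩ := hcm
      simp [PI] at hcm
      rcases hcm with rfl | rfl | rfl | rfl
      · exact absurd ((satC1 wFT).1 hs) (by decide)
      · exact absurd rfl hne
      · rfl
      · exact absurd ((satC4 wFT).1 hs) (by decide)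
    · rw [Finset.mem_erase]; exact ⟨by decide, by simp [PI]⟩
    · rw [Finset.mem_erase]; exact ⟨by decide, by simp [PI]⟩
    · decide
    · exact (satC1 wTT).2 (by decide)
    · exact (satC3 wTT).2 (by decide)
  · refine part2_helper C3 C1 C4 wTT wTF rfl ?_ ?_ ?_ ?_ rfl ?_ ?_
    · intro c hcm hs
      rw [Finset.mem_erase] at hcm
      obtain ⟨hne, hcm⟩ := hcm
      simp [PI] at hcm
      rcases hcm with rfl | rfl | rfl | rfl
      · rfl
      · exact absurd ((satC2 wTT).1 hs) (by decide)
      · exact absurd rfl hne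
      · exact absurd ((satC4 wTT).1 hs) (by decide)
    · rw [Finset.mem_erase]; exact ⟨by decide, by simp [PI]⟩
    · rw [Finset.mem_erase]; exact ⟨by decide, by simp [PI]⟩
    · decide
    · exact (satC4 wTF).2 (by decide)
    · exact (satC1 wTF).2 (by decide)
  · refine part2_helper C4 C1 C3 wTF wTT rfl ?_ ?_ ?_ ?_ rfl ?_ ?_
    · intro c hcm hs
      rw [Finset.mem_erase] at hcm
      obtain ⟨hne, hcm⟩ := hcm
      simp [PI] at hcm
      rcases hcm with rfl | rfl | rfl | rfl
      · rfl
      · exact absurd ((satC2 wTF).1 hs) (by decide)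
      · exact absurd ((satC3 wTF).1 hs) (by decide)
      · exact absurd rfl hne
    · rw [Finset.mem_erase]; exact ⟨by decide, by simp [PI]⟩
    · rw [Finset.mem_erase]; exact ⟨by decide, by simp [PI]⟩
    · decide
    · exact (satC3 wTT).2 (by decide)
    · exact (satC1 wTT).2 (by decide)


/-- Π = {a ∨ b, a ∨ ¬b, a ∨ c, a ∨ ¬c} and Π' = {a ∨ b, a ∨ ¬b} (a = 0, b = 1,
c = 2) are conditionally equivalent, yet no clause of Π is conditionally redundant in Π. -/
theorem condEquiv_proper_subset_but_no_redundant_clause :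
    condEquiv
        {({(0, true), (1, true)} : Clause), {(0, true), (1, false)},
          {(0, true), (2, true)}, {(0, true), (2, false)}}
        {({(0, true), (1, true)} : Clause), {(0, true), (1, false)}} ∧
      ∀ γ ∈ ({({(0, true), (1, true)} : Clause), {(0, true), (1, false)},
          {(0, true), (2, true)}, {(0, true), (2, false)}} : Finset Clause),
        ¬ condEquiv
            {({(0, true), (1, true)} : Clause), {(0, true), (1, false)},
              {(0, true), (2, true)}, {(0, true), (2, false)}}
            (({({(0, true), (1, true)} : Clause), {(0, true), (1, false)},
              {(0, true), (2, true)}, {(0, true), (2, false)}} : Finset Clause).erase γ) := by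
  exact ⟨part1, part2⟩
end
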